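/- Let $0<x<1$, $r>1$, $s=r+1$, and let $f_{i,j}(z)$, $\Delta_1(z)$ be the structure functions of $\mathcal{W}_{q,t}(\mathfrak{sl}(2|1))$. Then for integers $1 \leq j < i$, the fusion relation $f_{1,i}(z)\, f_{j,i}(x^{j+1} z) = f_{j+1,i}(x^{j} z)$ holds (without a $\Delta_1$ factor), as formal power series in $z$. -/

import Mathlib

/-!
Taking logarithms, the fusion relation becomes an identity between the exponent series, and
it holds coefficientwise: the coefficient of `z ^ n` reduces to the q-integer identity
`[n] + [j n] x^{(j+1) n} = [(j+1) n] x^{j n}`, both sides being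
`(x^{(2j+1) n} - x^{-n}) / (x - x⁻¹)`. The only analytic input is that the exponent series
converge near `0`: their coefficients grow at most geometrically, because `[a] ≥ 1` for `a ≥ 1`
and `|[a]| ≤ x^{-|a|} / (x⁻¹ - x)`.
-/

/-- The q-integer with real index: `[a]_x = (x^a - x^{-a})/(x - x⁻¹)`. -/
noncomputable def qint (x a : ℝ) : ℝ := (x ^ a - x ^ (-a)) / (x - x⁻¹)

/-- The structure function
`f_{i,j}(z) = exp(-∑_{m≥1} (1/m) [(r-1)m][rm][min(i,j)m][(s-max(i,j))m]/([m][sm]) (x-x⁻¹)² z^m)`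
with `s = r+1`, as a function of `z` (convergent for small `‖z‖`). -/
noncomputable def ff (x r : ℝ) (i j : ℕ) (z : ℂ) : ℂ :=
  Complex.exp (-∑' m : ℕ,
    ((qint x ((r - 1) * (m + 1)) * qint x (r * (m + 1)) * qint x ((min i j : ℝ) * (m + 1)) *
        qint x ((r + 1 - (max i j : ℝ)) * (m + 1)) /
        (qint x ((m : ℝ) + 1) * qint x ((r + 1) * (m + 1))) * (x - x⁻¹) ^ 2 : ℝ) : ℂ)
      * z ^ (m + 1) / ((m : ℂ) + 1))

/-- The rational function `Δ_i(z) = (1-x^{2r-i}z)(1-x^{-2r+i}z)/((1-x^i z)(1-x^{-i}z))`. -/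
noncomputable def Dlt (x r : ℝ) (i : ℕ) (z : ℂ) : ℂ :=
  ((1 - ((x ^ (2 * r - (i : ℝ)) : ℝ) : ℂ) * z) * (1 - ((x ^ ((i : ℝ) - 2 * r) : ℝ) : ℂ) * z)) /
    ((1 - ((x ^ (i : ℝ) : ℝ) : ℂ) * z) * (1 - ((x ^ (-(i : ℝ)) : ℝ) : ℂ) * z))

/-- `fcoeff x r i j n` is the coefficient of `z ^ n / n` in `-log f_{i,j}(z)`. -/
noncomputable def fcoeff (x r : ℝ) (i j : ℕ) (n : ℝ) : ℝ :=
  qint x ((r - 1) * n) * qint x (r * n) * qint x ((min i j : ℝ) * n) *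
      qint x ((r + 1 - (max i j : ℝ)) * n) / (qint x n * qint x ((r + 1) * n)) * (x - x⁻¹) ^ 2

noncomputable def fterm (x r : ℝ) (i j : ℕ) (z : ℂ) (m : ℕ) : ℂ :=
  (fcoeff x r i j (m + 1) : ℂ) * z ^ (m + 1) / ((m : ℂ) + 1)

theorem ff_eq_exp_neg_tsum_fterm (x r : ℝ) (i j : ℕ) (z : ℂ) :
    ff x r i j z = Complex.exp (-∑' m, fterm x r i j z m) := rfl

theorem qint_add_qint_mul_rpow {x : ℝ} (hx : 0 < x) (a n : ℝ) :
    qint x n + qint x (a * n) * x ^ ((a + 1) * n) = qint x ((a + 1) * n) * x ^ (a * n) := by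
  have hu : x ^ (a * n) ≠ 0 := (Real.rpow_pos_of_pos hx _).ne'
  have hv : x ^ n ≠ 0 := (Real.rpow_pos_of_pos hx _).ne'
  have hadd : x ^ ((a + 1) * n) = x ^ (a * n) * x ^ n := by
    rw [← Real.rpow_add hx]; ring_nf
  simp only [qint, Real.rpow_neg hx.le, hadd, div_mul_eq_mul_div, ← add_div]
  congr 1
  field_simp
  ring

theorem fcoeff_fusion {x : ℝ} (hx : 0 < x) (r : ℝ) {i j : ℕ} (hji : j < i) (n : ℝ) :
    fcoeff x r 1 i n + fcoeff x r j i n * x ^ (((j : ℝ) + 1) * n)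
      = fcoeff x r (j + 1) i n * x ^ ((j : ℝ) * n) := by
  have hi : (1 : ℝ) ≤ i := by exact_mod_cast (by omega : 1 ≤ i)
  have hji' : (j : ℝ) + 1 ≤ i := by exact_mod_cast hji
  simp only [fcoeff, Nat.cast_one, Nat.cast_add, min_eq_left hi, max_eq_right hi,
    min_eq_left hji', max_eq_right hji', min_eq_left (by linarith : (j : ℝ) ≤ i),
    max_eq_right (by linarith : (j : ℝ) ≤ i), one_mul]
  linear_combination qint x ((r - 1) * n) * qint x (r * n) * qint x ((r + 1 - i) * n) /
      (qint x n * qint x ((r + 1) * n)) * (x - x⁻¹) ^ 2 * qint_add_qint_mul_rpow hx j n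

theorem pow_pow_eq_rpow (x : ℝ) (k n : ℕ) : (x ^ k) ^ n = x ^ ((k : ℝ) * n) := by
  rw [← pow_mul, ← Real.rpow_natCast]
  push_cast
  rfl

theorem fterm_fusion {x : ℝ} (hx : 0 < x) (r : ℝ) {i j : ℕ} (hji : j < i) (z : ℂ)
    (m : ℕ) :
    fterm x r 1 i z m + fterm x r j i (((x ^ (j + 1) : ℝ) : ℂ) * z) m
      = fterm x r (j + 1) i (((x ^ j : ℝ) : ℂ) * z) m := by
  have key : fcoeff x r 1 i (m + 1) + fcoeff x r j i (m + 1) * (x ^ (j + 1)) ^ (m + 1)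
      = fcoeff x r (j + 1) i (m + 1) * (x ^ j) ^ (m + 1) := by
    rw [pow_pow_eq_rpow, pow_pow_eq_rpow]
    exact_mod_cast fcoeff_fusion hx r hji ((m : ℝ) + 1)
  have keyC := congrArg (fun t : ℝ => (t : ℂ)) key
  simp only [fterm, mul_pow]
  push_cast at keyC ⊢
  linear_combination z ^ (m + 1) / ((m : ℂ) + 1) * keyC

theorem one_le_qint {x : ℝ} (hx0 : 0 < x) (hx1 : x < 1) {a : ℝ} (ha : 1 ≤ a) :
    1 ≤ qint x a := by
  have hlow : x⁻¹ ≤ x ^ (-a) := by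
    rw [← Real.rpow_neg_one]
    exact Real.rpow_le_rpow_of_exponent_ge hx0 hx1.le (by linarith)
  have hup : x ^ a ≤ x := by
    simpa using Real.rpow_le_rpow_of_exponent_ge hx0 hx1.le ha
  have hd : 0 < x⁻¹ - x := by linarith [(one_lt_inv₀ hx0).2 hx1]
  rw [qint, ← neg_div_neg_eq, one_le_div (by linarith)]
  linarith

theorem abs_qint_le {x : ℝ} (hx0 : 0 < x) (hx1 : x < 1) (a : ℝ) :
    |qint x a| ≤ x ^ (-|a|) / (x⁻¹ - x) := by
  have hd : 0 < x⁻¹ - x := by linarith [(one_lt_inv₀ hx0).2 hx1]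
  have hle : ∀ b, b = a ∨ b = -a → x ^ b ≤ x ^ (-|a|) := by
    rintro b (rfl | rfl)
    · exact Real.rpow_le_rpow_of_exponent_ge hx0 hx1.le (neg_abs_le b)
    · exact Real.rpow_le_rpow_of_exponent_ge hx0 hx1.le (by simpa using le_abs_self a)
  rw [qint, abs_div, abs_sub_comm x, abs_of_pos hd]
  gcongr
  exact abs_sub_le_of_nonneg_of_le (Real.rpow_nonneg hx0.le _) (hle a (.inl rfl))
    (Real.rpow_nonneg hx0.le _) (hle (-a) (.inr rfl))

theorem abs_qint_mul_natCast_le {x : ℝ} (hx0 : 0 < x) (hx1 : x < 1) (a : ℝ) (n : ℕ) :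
    |qint x (a * n)| ≤ (x ^ (-|a|)) ^ n / (x⁻¹ - x) := by
  calc |qint x (a * n)| ≤ x ^ (-|a * n|) / (x⁻¹ - x) := abs_qint_le hx0 hx1 _
    _ = (x ^ (-|a|)) ^ n / (x⁻¹ - x) := by
      rw [abs_mul, Nat.abs_cast, ← neg_mul, Real.rpow_mul_natCast hx0.le]

theorem exists_abs_fcoeff_le {x : ℝ} (hx0 : 0 < x) (hx1 : x < 1) {r : ℝ} (hr : 0 ≤ r)
    (i j : ℕ) :
    ∃ C K : ℝ, 0 < K ∧ ∀ m : ℕ, |fcoeff x r i j (m + 1)| ≤ C * K ^ (m + 1) := by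
  set D := x⁻¹ - x
  have hD : 0 < D := by linarith [(one_lt_inv₀ hx0).2 hx1]
  set K := fun a : ℝ => x ^ (-|a|)
  refine ⟨1 / D ^ 2, K (r - 1) * K r * K (min (i : ℝ) j) * K (r + 1 - max (i : ℝ) j),
    by positivity, fun m => ?_⟩
  have hm : (m : ℝ) + 1 = ((m + 1 : ℕ) : ℝ) := by push_cast; rfl
  have hn : (1 : ℝ) ≤ (m + 1 : ℕ) := by exact_mod_cast Nat.le_add_left 1 m
  have hden : 1 ≤ |qint x (m + 1 : ℕ)| * |qint x ((r + 1) * (m + 1 : ℕ))| :=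
    one_le_mul_of_one_le_of_one_le ((one_le_qint hx0 hx1 hn).trans (le_abs_self _))
      ((one_le_qint hx0 hx1 (by nlinarith)).trans (le_abs_self _))
  have hbound := abs_qint_mul_natCast_le hx0 hx1 (n := m + 1)
  rw [fcoeff, hm, abs_mul, abs_div, abs_mul, abs_mul, abs_mul, abs_mul, abs_pow, abs_sub_comm x,
    abs_of_pos hD]
  calc _ ≤ |qint x ((r - 1) * (m + 1 : ℕ))| * |qint x (r * (m + 1 : ℕ))| *
          |qint x (min (i : ℝ) j * (m + 1 : ℕ))| *
          |qint x ((r + 1 - max (i : ℝ) j) * (m + 1 : ℕ))| * D ^ 2 := by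
        gcongr
        exact div_le_self (by positivity) hden
    _ ≤ K (r - 1) ^ (m + 1) / D * (K r ^ (m + 1) / D) * (K (min (i : ℝ) j) ^ (m + 1) / D) *
          (K (r + 1 - max (i : ℝ) j) ^ (m + 1) / D) * D ^ 2 := by
        gcongr <;> exact hbound _
    _ = _ := by
        field_simp
        ring

theorem summable_coeff_mul_pow_div {c : ℕ → ℝ} {C K : ℝ}
    (hc : ∀ m, |c m| ≤ C * K ^ (m + 1)) {z : ℂ} (hz : |K| * ‖z‖ < 1) :
    Summable fun m : ℕ => (c m : ℂ) * z ^ (m + 1) / ((m : ℂ) + 1) := by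
  have hgeo : Summable fun m : ℕ => C * (K * ‖z‖) ^ (m + 1) := by
    refine .mul_left C ((summable_nat_add_iff 1).2 (summable_geometric_of_norm_lt_one ?_))
    rwa [norm_mul, norm_norm, Real.norm_eq_abs]
  refine .of_norm_bounded hgeo fun m => ?_
  have hm : 1 ≤ ‖(m : ℂ) + 1‖ := by
    rw [← Nat.cast_succ, Complex.norm_natCast]
    exact_mod_cast Nat.le_add_left 1 m
  rw [norm_div, norm_mul, Complex.norm_real, Real.norm_eq_abs, norm_pow, mul_pow, ← mul_assoc]
  exact (div_le_self (by positivity) hm).trans (by gcongr; exact hc m)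

theorem exists_summable_fterm {x r : ℝ} (hx0 : 0 < x) (hx1 : x < 1) (hr : 0 ≤ r) (i j : ℕ) :
    ∃ ε > 0, ∀ z : ℂ, ‖z‖ < ε → Summable (fterm x r i j z) := by
  obtain ⟨C, K, hK, hc⟩ := exists_abs_fcoeff_le hx0 hx1 hr i j
  refine ⟨1 / K, by positivity, fun z hz => summable_coeff_mul_pow_div hc ?_⟩
  rw [abs_of_pos hK]
  rwa [lt_div_iff₀ hK, mul_comm] at hz

theorem f_fusion_no_delta_general (x : ℝ) (hx0 : 0 < x) (hx1 : x < 1) (r : ℝ) (hr : 1 < r)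
    (i j : ℕ) (hji : j < i) :
    ∃ ε > 0, ∀ z : ℂ, ‖z‖ < ε →
      ff x r 1 i z * ff x r j i (((x ^ (j + 1) : ℝ) : ℂ) * z)
        = ff x r (j + 1) i (((x ^ j : ℝ) : ℂ) * z) := by
  have hr0 : 0 ≤ r := by linarith
  obtain ⟨ε₁, hε₁, h₁⟩ := exists_summable_fterm hx0 hx1 hr0 1 i
  obtain ⟨ε₂, hε₂, h₂⟩ := exists_summable_fterm hx0 hx1 hr0 j i
  refine ⟨min ε₁ ε₂, lt_min hε₁ hε₂, fun z hz => ?_⟩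
  have hscaled : ‖((x ^ (j + 1) : ℝ) : ℂ) * z‖ ≤ ‖z‖ := by
    rw [norm_mul, Complex.norm_real, Real.norm_of_nonneg (by positivity)]
    exact mul_le_of_le_one_left (norm_nonneg z) (pow_le_one₀ hx0.le hx1.le)
  have hs₁ := h₁ z (hz.trans_le (min_le_left _ _))
  have hs₂ := h₂ _ (hscaled.trans_lt (hz.trans_le (min_le_right _ _)))
  rw [ff_eq_exp_neg_tsum_fterm, ff_eq_exp_neg_tsum_fterm, ff_eq_exp_neg_tsum_fterm,
    ← Complex.exp_add, ← neg_add, ← hs₁.tsum_add hs₂]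
  simp only [fterm_fusion hx0 r hji]

/-- Fusion relation `f_{1,i}(z) f_{j,i}(x^{j+1} z) = f_{j+1,i}(x^j z)` for `1 ≤ j < i`. -/
theorem f_fusion_no_delta (x : ℝ) (hx0 : 0 < x) (hx1 : x < 1) (r : ℝ) (hr : 1 < r)
    (i j : ℕ) (hj : 1 ≤ j) (hji : j < i) :
    ∃ ε > 0, ∀ z : ℂ, ‖z‖ < ε →
      ff x r 1 i z * ff x r j i (((x ^ (j + 1) : ℝ) : ℂ) * z)
        = ff x r (j + 1) i (((x ^ j : ℝ) : ℂ) * z) :=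
  f_fusion_no_delta_general x hx0 hx1 r hr i j hji
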